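/- Let n ≥ 2 and let ℌ⁻ be the degenerate spin affine Hecke algebra of type A_{n−1}. Let γ = (γ_1,…,γ_k) be a composition of n with ℓ(t_γ) = n − k even, and let μ be the partition of n obtained by sorting the parts of γ in decreasing order. If μ ∉ 𝒪𝒫_n, then t_γ ∈ [ℌ⁻, ℌ⁻]. If μ ∈ 𝒪𝒫_n, then t_γ − t_μ ∈ [ℌ⁻, ℌ⁻] or t_γ + t_μ ∈ [ℌ⁻, ℌ⁻]. -/

import Mathlib

namespace SAHA

/-- Generators of the degenerate spin affine Hecke algebra of type `A_{n-1}`: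
`t_1, …, t_{n-1}` and `b_1, …, b_n`. -/
inductive GenS (n : ℕ) : Type
  | t : Fin (n - 1) → GenS n
  | b : Fin n → GenS n

noncomputable def T (n : ℕ) (i : Fin (n - 1)) : FreeAlgebra ℂ (GenS n) :=
  FreeAlgebra.ι ℂ (GenS.t i)
noncomputable def B (n : ℕ) (i : Fin n) : FreeAlgebra ℂ (GenS n) :=
  FreeAlgebra.ι ℂ (GenS.b i)

/-- The defining relations of the degenerate spin affine Hecke algebra of type
`A_{n-1}`. -/
inductive RelS (n : ℕ) : FreeAlgebra ℂ (GenS n) → FreeAlgebra ℂ (GenS n) → Prop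
  | tsq (i : Fin (n - 1)) : RelS n (T n i * T n i) 1
  | braid (i : ℕ) (h : i + 1 < n - 1) :
      RelS n (T n ⟨i, Nat.lt_of_succ_lt h⟩ * T n ⟨i + 1, h⟩ * T n ⟨i, Nat.lt_of_succ_lt h⟩)
        (T n ⟨i + 1, h⟩ * T n ⟨i, Nat.lt_of_succ_lt h⟩ * T n ⟨i + 1, h⟩)
  | tt (i j : Fin (n - 1)) (hij : (i : ℕ) + 1 < (j : ℕ) ∨ (j : ℕ) + 1 < (i : ℕ)) :
      RelS n ((T n i * T n j) * (T n i * T n j)) (-1)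
  | bb (i j : Fin n) (hij : i ≠ j) : RelS n (B n i * B n j) (-(B n j * B n i))
  | bt (i : ℕ) (h : i + 1 < n) :
      RelS n (B n ⟨i + 1, h⟩ * T n ⟨i, by omega⟩ + T n ⟨i, by omega⟩ *
        B n ⟨i, Nat.lt_of_succ_lt h⟩) 1
  | tb (j : Fin (n - 1)) (i : Fin n) (h1 : (i : ℕ) ≠ (j : ℕ)) (h2 : (i : ℕ) ≠ (j : ℕ) + 1) :
      RelS n (T n j * B n i + B n i * T n j) 0

/-- The degenerate spin affine Hecke algebra of type `A_{n-1}`. -/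
abbrev HS (n : ℕ) := RingQuot (RelS n)

noncomputable def tH (n : ℕ) (i : Fin (n - 1)) : HS n :=
  RingQuot.mkAlgHom ℂ (RelS n) (T n i)
noncomputable def bH (n : ℕ) (i : Fin n) : HS n :=
  RingQuot.mkAlgHom ℂ (RelS n) (B n i)

/-- `t_k` for a natural-number index (`t_{k+1}` in 1-indexed notation), defaulting to `1`
out of range. -/
noncomputable def tN (n : ℕ) (k : ℕ) : HS n :=
  if h : k < n - 1 then tH n ⟨k, h⟩ else 1

/-- The linear span of all commutators in an algebra `A`. -/
def commSpan (A : Type*) [Ring A] [Algebra ℂ A] : Submodule ℂ A :=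
  Submodule.span ℂ {z : A | ∃ a b : A, z = a * b - b * a}

/-- `t_{(m)}` on the block `[a, b)`: the product `t_{a+1} t_{a+2} ⋯ t_{b-1}`
(1-indexed). -/
noncomputable def tSeg (n : ℕ) (a b : ℕ) : HS n :=
  ((List.range (b - a - 1)).map fun j => tN n (a + j)).prod

/-- `t_γ = t_{(γ_1)} t_{(γ_2)} ⋯ t_{(γ_k)}` for a composition `γ` of `n`. -/
noncomputable def tGamma (n : ℕ) (γ : List ℕ) : HS n :=
  ((List.range γ.length).map fun k => tSeg n ((γ.take k).sum) ((γ.take (k + 1)).sum)).prod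

section RelLemmas

variable (n : ℕ)

lemma rel_tsq (i : Fin (n - 1)) : tH n i * tH n i = 1 := by
  simpa [tH, map_mul] using RingQuot.mkAlgHom_rel ℂ (RelS.tsq (n := n) i)

lemma rel_braid (i : ℕ) (h : i + 1 < n - 1) :
    tH n ⟨i, Nat.lt_of_succ_lt h⟩ * tH n ⟨i + 1, h⟩ * tH n ⟨i, Nat.lt_of_succ_lt h⟩ =
      tH n ⟨i + 1, h⟩ * tH n ⟨i, Nat.lt_of_succ_lt h⟩ * tH n ⟨i + 1, h⟩ := by
  simpa [tH, map_mul] using RingQuot.mkAlgHom_rel ℂ (RelS.braid (n := n) i h)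

lemma rel_tt (i j : Fin (n - 1)) (hij : (i : ℕ) + 1 < (j : ℕ) ∨ (j : ℕ) + 1 < (i : ℕ)) :
    (tH n i * tH n j) * (tH n i * tH n j) = -1 := by
  simpa [tH, map_mul, map_neg, map_one] using RingQuot.mkAlgHom_rel ℂ (RelS.tt (n := n) i j hij)

lemma rel_bb (i j : Fin n) (hij : i ≠ j) : bH n i * bH n j = -(bH n j * bH n i) := by
  simpa [bH, map_mul, map_neg] using RingQuot.mkAlgHom_rel ℂ (RelS.bb (n := n) i j hij)

lemma rel_bt (i : ℕ) (h : i + 1 < n) :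
    bH n ⟨i + 1, h⟩ * tH n ⟨i, by omega⟩ + tH n ⟨i, by omega⟩ *
      bH n ⟨i, Nat.lt_of_succ_lt h⟩ = 1 := by
  simpa [bH, tH, map_mul, map_add, map_one] using
    RingQuot.mkAlgHom_rel ℂ (RelS.bt (n := n) i h)

lemma rel_tb (j : Fin (n - 1)) (i : Fin n) (h1 : (i : ℕ) ≠ (j : ℕ))
    (h2 : (i : ℕ) ≠ (j : ℕ) + 1) :
    tH n j * bH n i + bH n i * tH n j = 0 := by
  simpa [bH, tH, map_mul, map_add] using
    RingQuot.mkAlgHom_rel ℂ (RelS.tb (n := n) j i h1 h2)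

/-- The squares `b_i²` commute pairwise. -/
lemma bsq_comm (i j : Fin n) : bH n i ^ 2 * bH n j ^ 2 = bH n j ^ 2 * bH n i ^ 2 := by
  rcases eq_or_ne i j with rfl | hij
  · rfl
  · set a := bH n i
    set b := bH n j
    have h : a * b = -(b * a) := rel_bb n i j hij
    have aux : a * (b * b) = b * b * a := by
      calc a * (b * b) = a * b * b := (mul_assoc a b b).symm
        _ = -(b * a) * b := congrArg (· * b) h
        _ = -(b * a * b) := neg_mul (b * a) b
        _ = -(b * (a * b)) := neg_inj.mpr (mul_assoc b a b)
        _ = -(b * -(b * a)) := neg_inj.mpr (congrArg (b * ·) h)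
        _ = -(-(b * (b * a))) := neg_inj.mpr (mul_neg b (b * a))
        _ = b * (b * a) := neg_neg (b * (b * a))
        _ = b * b * a := (mul_assoc b b a).symm
    have main : a * a * (b * b) = b * b * (a * a) := by
      calc a * a * (b * b) = a * (a * (b * b)) := mul_assoc a a (b * b)
        _ = a * (b * b * a) := congrArg (a * ·) aux
        _ = a * (b * b) * a := (mul_assoc a (b * b) a).symm
        _ = b * b * a * a := congrArg (· * a) aux
        _ = b * b * (a * a) := mul_assoc (b * b) a a
    calc a ^ 2 * b ^ 2 = a * a * (b * b) := by rw [pow_two, pow_two]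
      _ = b * b * (a * a) := main
      _ = b ^ 2 * a ^ 2 := by rw [pow_two, pow_two]

end RelLemmas

/-- The parity automorphism of the superalgebra `HS n`: it negates all the (odd)
generators `t_i` and `b_i`. -/
noncomputable def thetaS (n : ℕ) : HS n →ₐ[ℂ] HS n :=
  RingQuot.liftAlgHom ℂ ⟨FreeAlgebra.lift ℂ (fun g => match g with
      | GenS.t i => -(tH n i)
      | GenS.b i => -(bH n i)), by
    intro a b hab
    induction hab with
    | tsq i =>
        simp only [map_mul, map_one, map_neg, T, FreeAlgebra.lift_ι_apply]
        exact (neg_mul_neg (tH n i) (tH n i)).trans (rel_tsq n i)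
    | braid i h =>
        simp only [map_mul, map_neg, T, FreeAlgebra.lift_ι_apply]
        calc -tH n ⟨i, Nat.lt_of_succ_lt h⟩ * -tH n ⟨i + 1, h⟩ * -tH n ⟨i, Nat.lt_of_succ_lt h⟩
            = (tH n ⟨i, Nat.lt_of_succ_lt h⟩ * tH n ⟨i + 1, h⟩) * -tH n ⟨i, Nat.lt_of_succ_lt h⟩ :=
              congrArg (· * -tH n ⟨i, Nat.lt_of_succ_lt h⟩)
                (neg_mul_neg (tH n ⟨i, Nat.lt_of_succ_lt h⟩) (tH n ⟨i + 1, h⟩))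
          _ = -(tH n ⟨i, Nat.lt_of_succ_lt h⟩ * tH n ⟨i + 1, h⟩ * tH n ⟨i, Nat.lt_of_succ_lt h⟩) :=
              mul_neg (tH n ⟨i, Nat.lt_of_succ_lt h⟩ * tH n ⟨i + 1, h⟩)
                (tH n ⟨i, Nat.lt_of_succ_lt h⟩)
          _ = -(tH n ⟨i + 1, h⟩ * tH n ⟨i, Nat.lt_of_succ_lt h⟩ * tH n ⟨i + 1, h⟩) :=
              neg_inj.mpr (rel_braid n i h)
          _ = (tH n ⟨i + 1, h⟩ * tH n ⟨i, Nat.lt_of_succ_lt h⟩) * -tH n ⟨i + 1, h⟩ :=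
              (mul_neg (tH n ⟨i + 1, h⟩ * tH n ⟨i, Nat.lt_of_succ_lt h⟩)
                (tH n ⟨i + 1, h⟩)).symm
          _ = -tH n ⟨i + 1, h⟩ * -tH n ⟨i, Nat.lt_of_succ_lt h⟩ * -tH n ⟨i + 1, h⟩ :=
              congrArg (· * -tH n ⟨i + 1, h⟩)
                (neg_mul_neg (tH n ⟨i + 1, h⟩) (tH n ⟨i, Nat.lt_of_succ_lt h⟩)).symm
    | tt i j hij =>
        simp only [map_mul, map_neg, map_one, T, FreeAlgebra.lift_ι_apply]
        calc (-tH n i * -tH n j) * (-tH n i * -tH n j)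
            = (tH n i * tH n j) * (-tH n i * -tH n j) :=
              congrArg (· * (-tH n i * -tH n j)) (neg_mul_neg (tH n i) (tH n j))
          _ = (tH n i * tH n j) * (tH n i * tH n j) :=
              congrArg ((tH n i * tH n j) * ·) (neg_mul_neg (tH n i) (tH n j))
          _ = -1 := rel_tt n i j hij
    | bb i j hij =>
        simp only [map_mul, map_neg, B, FreeAlgebra.lift_ι_apply]
        calc -bH n i * -bH n j = bH n i * bH n j := neg_mul_neg (bH n i) (bH n j)
          _ = -(bH n j * bH n i) := rel_bb n i j hij
          _ = -(-bH n j * -bH n i) := neg_inj.mpr (neg_mul_neg (bH n j) (bH n i)).symm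
    | bt i h =>
        simp only [map_mul, map_add, map_one, map_neg, T, B, FreeAlgebra.lift_ι_apply]
        calc -bH n ⟨i + 1, h⟩ * -tH n ⟨i, by omega⟩ + -tH n ⟨i, by omega⟩ *
              -bH n ⟨i, Nat.lt_of_succ_lt h⟩
            = bH n ⟨i + 1, h⟩ * tH n ⟨i, by omega⟩ + tH n ⟨i, by omega⟩ *
              bH n ⟨i, Nat.lt_of_succ_lt h⟩ :=
              congrArg₂ (· + ·) (neg_mul_neg (bH n ⟨i + 1, h⟩) (tH n ⟨i, by omega⟩))
                (neg_mul_neg (tH n ⟨i, by omega⟩) (bH n ⟨i, Nat.lt_of_succ_lt h⟩))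
          _ = 1 := rel_bt n i h
    | tb j i h1 h2 =>
        simp only [map_mul, map_add, map_neg, map_zero, T, B, FreeAlgebra.lift_ι_apply]
        calc -tH n j * -bH n i + -bH n i * -tH n j
            = tH n j * bH n i + bH n i * tH n j :=
              congrArg₂ (· + ·) (neg_mul_neg (tH n j) (bH n i))
                (neg_mul_neg (bH n i) (tH n j))
          _ = 0 := rel_tb n j i h1 h2⟩

/-- The even part of the superalgebra `HS n`. -/
noncomputable def evenPartS (n : ℕ) : Submodule ℂ (HS n) :=
  LinearMap.eqLocus (thetaS n).toLinearMap LinearMap.id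

/-- The even cocenter of `HS n`. -/
noncomputable def evenCocenterS (n : ℕ) : Submodule ℂ (HS n ⧸ commSpan (HS n)) :=
  (evenPartS n).map (commSpan (HS n)).mkQ

end SAHA
namespace SAHA

/-- The parts of a composition `γ`, sorted in decreasing order. -/
def sortDescL (γ : List ℕ) : List ℕ := ((γ : Multiset ℕ).sort (· ≤ ·)).reverse

/-!
Only the generators `t_i` matter: they satisfy the relations of the spin symmetric group,
`t_i² = 1`, the braid relations, and `t_i t_j = -t_j t_i` for `|i - j| > 1`.

If `γ` has an even part, cut `γ` right after its first even part. This writes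
`t_γ = x y` with `x`, `y` words of odd length in mutually distant generators, so `x y = -y x`
and `t_γ = ½ [x, y]`.

For the second claim it suffices to swap two adjacent parts `α + 1`, `β + 1` occupying the
generators `t_s, …, t_{s+α+β}`. Let `C = t_s t_{s+1} ⋯ t_{s+α+β}`. Up to sign,
`C t_r C⁻¹ = t_{r+1}` inside this range, and `C² t_{s+α+β} C⁻² = t_s` wraps around. So
conjugation by `C^(β+1)` rotates the two cycle words into the swapped ones, while it commutes
up to sign with the words of the other parts. All of this holds only up to sign, which is why
one gets `t_γ ≡ ± t_μ` modulo commutators.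
-/

section

variable {α : Type*}

def EqUpToSign [Neg α] (x y : α) : Prop := x = y ∨ x = -y

infix:50 " =± " => EqUpToSign

namespace EqUpToSign

theorem refl [Neg α] (x : α) : x =± x := Or.inl rfl

theorem of_eq [Neg α] {x y : α} (h : x = y) : x =± y := Or.inl h

theorem symm [InvolutiveNeg α] {x y : α} (h : x =± y) : y =± x := by
  rcases h with rfl | rfl
  · exact refl _
  · exact Or.inr (neg_neg y).symm

theorem trans [InvolutiveNeg α] {x y z : α} (h₁ : x =± y) (h₂ : y =± z) : x =± z := by
  rcases h₁ with rfl | rfl <;> rcases h₂ with rfl | rfl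
  · exact refl _
  · exact Or.inr rfl
  · exact Or.inr rfl
  · exact Or.inl (neg_neg _)

instance [InvolutiveNeg α] : @Trans α α α EqUpToSign EqUpToSign EqUpToSign := ⟨trans⟩

theorem mul_left [Mul α] [HasDistribNeg α] {x y : α} (z : α) (h : x =± y) :
    z * x =± z * y := by
  rcases h with rfl | rfl
  · exact refl _
  · exact Or.inr (mul_neg z y)

theorem mul_right [Mul α] [HasDistribNeg α] {x y : α} (z : α) (h : x =± y) :
    x * z =± y * z := by
  rcases h with rfl | rfl
  · exact refl _
  · exact Or.inr (neg_mul y z)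

theorem zsmul_neg_one_pow [AddGroup α] (k : ℕ) (x : α) : ((-1 : ℤ) ^ k) • x =± x := by
  rcases neg_one_pow_eq_or ℤ k with h | h
  · exact of_eq (by rw [h, one_zsmul])
  · exact Or.inr (by rw [h, neg_one_zsmul])

theorem pow_mul_of_forall [Monoid α] [HasDistribNeg α] {c : α} {x : ℕ → α} :
    ∀ {d : ℕ}, (∀ i < d, c * x i =± x (i + 1) * c) → c ^ d * x 0 =± x d * c ^ d
  | 0, _ => by simpa using refl (x 0)
  | d + 1, h => calc
      c ^ (d + 1) * x 0 = c * (c ^ d * x 0) := by rw [pow_succ', mul_assoc]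
      _ =± c * (x d * c ^ d) := (pow_mul_of_forall fun i hi => h i (by omega)).mul_left c
      _ = (c * x d) * c ^ d := (mul_assoc _ _ _).symm
      _ =± (x (d + 1) * c) * c ^ d := (h d (by omega)).mul_right _
      _ = x (d + 1) * c ^ (d + 1) := by rw [pow_succ', mul_assoc]

theorem mul_prod_range'_of_forall [Monoid α] [HasDistribNeg α] {w : α} {x : ℕ → α} :
    ∀ {k a b : ℕ}, (∀ i < k, w * x (a + i) =± x (b + i) * w) →
      w * ((List.range' a k).map x).prod =± ((List.range' b k).map x).prod * w
  | 0, _, _, _ => by simpa using refl w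
  | k + 1, a, b, h => by
    simp only [List.range'_succ, List.map_cons, List.prod_cons]
    calc w * (x a * ((List.range' (a + 1) k).map x).prod)
        = (w * x a) * ((List.range' (a + 1) k).map x).prod := (mul_assoc _ _ _).symm
      _ =± (x b * w) * ((List.range' (a + 1) k).map x).prod := (h 0 (by omega)).mul_right _
      _ = x b * (w * ((List.range' (a + 1) k).map x).prod) := mul_assoc _ _ _
      _ =± x b * (((List.range' (b + 1) k).map x).prod * w) :=
        (mul_prod_range'_of_forall fun i hi => by
          simpa only [Nat.add_right_comm _ 1 i, Nat.add_assoc, Nat.add_comm 1 i] using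
            h (i + 1) (by omega)).mul_left _
      _ = x b * ((List.range' (b + 1) k).map x).prod * w := (mul_assoc _ _ _).symm

end EqUpToSign

end

section Anticommute

variable {A : Type*} [Ring A]

theorem mul_prod_eq_zsmul_of_anticomm {a : A} :
    ∀ {l : List A}, (∀ x ∈ l, a * x = -(x * a)) →
      a * l.prod = (-1 : ℤ) ^ l.length • (l.prod * a)
  | [], _ => by simp
  | x :: l, h => by
    have ih := mul_prod_eq_zsmul_of_anticomm fun y hy => h y (List.mem_cons_of_mem x hy)
    rw [List.prod_cons, ← mul_assoc, h x List.mem_cons_self, neg_mul, mul_assoc, ih,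
      mul_smul_comm, List.length_cons, pow_succ, mul_neg_one, neg_smul, ← mul_assoc]

theorem prod_mul_prod_eq_zsmul_of_anticomm {l₁ l₂ : List A}
    (h : ∀ x ∈ l₁, ∀ y ∈ l₂, x * y = -(y * x)) :
    l₁.prod * l₂.prod =
      (-1 : ℤ) ^ (l₁.length * l₂.length) • (l₂.prod * l₁.prod) := by
  induction l₁ with
  | nil => simp
  | cons x l₁ ih =>
    rw [List.prod_cons, mul_assoc, ih fun y hy => h y (List.mem_cons_of_mem x hy), mul_smul_comm,
      ← mul_assoc, mul_prod_eq_zsmul_of_anticomm (h x List.mem_cons_self), smul_mul_assoc,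
      smul_smul, ← pow_add, List.length_cons, mul_assoc]
    congr 2
    ring

end Anticommute

theorem mkQ_eqUpToSign_iff {R M : Type*} [Ring R] [AddCommGroup M] [Module R M]
    (p : Submodule R M) {x y : M} : p.mkQ x =± p.mkQ y ↔ x - y ∈ p ∨ x + y ∈ p := by
  rw [EqUpToSign, ← map_neg, Submodule.mkQ_apply, Submodule.mkQ_apply, Submodule.mkQ_apply,
    Submodule.Quotient.eq, Submodule.Quotient.eq, sub_neg_eq_add]

section Cocenter

variable {A : Type*} [Ring A] [Algebra ℂ A]

theorem commutator_mem_commSpan (a b : A) : a * b - b * a ∈ commSpan A :=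
  Submodule.subset_span ⟨a, b, rfl⟩

theorem mul_mem_commSpan_of_anticomm {a b : A} (h : a * b = -(b * a)) : a * b ∈ commSpan A := by
  have hba : b * a = -(a * b) := by rw [h, neg_neg]
  have hhalf : a * b = (2 : ℂ)⁻¹ • (a * b - b * a) := by
    rw [hba, sub_neg_eq_add, ← two_smul ℂ, smul_smul, inv_mul_cancel₀ two_ne_zero, one_smul]
  rw [hhalf]
  exact Submodule.smul_mem _ _ (commutator_mem_commSpan a b)

theorem mkQ_eq_of_isUnit_of_mul_eq {w a b : A} (hw : IsUnit w) (h : w * a = b * w) :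
    (commSpan A).mkQ a = (commSpan A).mkQ b := by
  obtain ⟨u, rfl⟩ := hw
  have ha : a = ↑u⁻¹ * (b * u) := by rw [← h, ← mul_assoc, Units.inv_mul, one_mul]
  have hcomm := commutator_mem_commSpan (↑u⁻¹ : A) (b * u)
  rw [mul_assoc, Units.mul_inv, mul_one, ← ha] at hcomm
  rwa [Submodule.mkQ_apply, Submodule.mkQ_apply, Submodule.Quotient.eq]

theorem mkQ_eqUpToSign_of_isUnit {w a b : A} (hw : IsUnit w) (h : w * a =± b * w) :
    (commSpan A).mkQ a =± (commSpan A).mkQ b := by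
  rcases h with h | h
  · exact .of_eq (mkQ_eq_of_isUnit_of_mul_eq hw h)
  · rw [← neg_mul] at h
    exact Or.inr (by rw [mkQ_eq_of_isUnit_of_mul_eq hw h, map_neg])

end Cocenter

/-- The relations satisfied by the generators `t_i` (`i < N`) of the spin symmetric group
algebra; indices `i ≥ N` only have to square to `1`. -/
structure SpinBraidRelations {A : Type*} [Ring A] (t : ℕ → A) (N : ℕ) : Prop where
  mul_self : ∀ i, t i * t i = 1
  braid : ∀ i, i + 1 < N → t i * t (i + 1) * t i = t (i + 1) * t i * t (i + 1)
  anticomm : ∀ i j, i + 1 < j → j < N → t i * t j = -(t j * t i)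

namespace SpinBraidRelations

variable {A : Type*} [Ring A] {t : ℕ → A} {N : ℕ}

theorem isUnit_prod (ht : SpinBraidRelations t N) (l : List ℕ) : IsUnit (l.map t).prod :=
  List.prod_isUnit fun _ hx => by
    obtain ⟨i, -, rfl⟩ := List.mem_map.1 hx
    exact ⟨⟨t i, t i, ht.mul_self i, ht.mul_self i⟩, rfl⟩

theorem prod_mul_prod (ht : SpinBraidRelations t N) {l₁ l₂ : List ℕ}
    (h : ∀ i ∈ l₁, ∀ j ∈ l₂, i + 1 < j) (hN : ∀ j ∈ l₂, j < N) :
    (l₁.map t).prod * (l₂.map t).prod =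
      (-1 : ℤ) ^ (l₁.length * l₂.length) • ((l₂.map t).prod * (l₁.map t).prod) := by
  simpa using prod_mul_prod_eq_zsmul_of_anticomm (l₁ := l₁.map t) (l₂ := l₂.map t) (by
    simp only [List.mem_map]
    rintro _ ⟨i, hi, rfl⟩ _ ⟨j, hj, rfl⟩
    exact ht.anticomm i j (h i hi j hj) (hN j hj))

theorem prod_mul_prod_eqUpToSign (ht : SpinBraidRelations t N) {l₁ l₂ : List ℕ}
    (h : ∀ i ∈ l₁, ∀ j ∈ l₂, i + 1 < j) (hN : ∀ j ∈ l₂, j < N) :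
    (l₁.map t).prod * (l₂.map t).prod =± (l₂.map t).prod * (l₁.map t).prod := by
  rw [ht.prod_mul_prod h hN]
  exact .zsmul_neg_one_pow _ _

theorem range'_prod_mul (ht : SpinBraidRelations t N) {s k r : ℕ} (hsr : s ≤ r)
    (hr : r + 2 ≤ s + k) (hk : s + k ≤ N) :
    ((List.range' s k).map t).prod * t r =± t (r + 1) * ((List.range' s k).map t).prod := by
  obtain ⟨c, rfl⟩ : ∃ c, k = (r - s) + (c + 1 + 1) := ⟨k - (r - s) - 2, by omega⟩
  have hsplit : List.range' s (r - s + (c + 1 + 1)) =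
      List.range' s (r - s) ++ r :: (r + 1) :: List.range' (r + 2) c := by
    rw [← List.range'_append, Nat.one_mul, Nat.add_sub_cancel' hsr, List.range'_succ,
      List.range'_succ]
  set L := ((List.range' s (r - s)).map t).prod
  set R := ((List.range' (r + 2) c).map t).prod
  have hR : R * t r =± t r * R := by
    simpa [R] using (ht.prod_mul_prod_eqUpToSign (l₁ := [r]) (l₂ := List.range' (r + 2) c)
      (by simp only [List.mem_singleton, List.mem_range'_1]; omega)
      (by simp only [List.mem_range'_1]; omega)).symm
  have hL : L * t (r + 1) =± t (r + 1) * L := by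
    simpa [L] using ht.prod_mul_prod_eqUpToSign (l₁ := List.range' s (r - s)) (l₂ := [r + 1])
      (by simp only [List.mem_singleton, List.mem_range'_1]; omega)
      (by simp only [List.mem_singleton]; omega)
  calc ((List.range' s (r - s + (c + 1 + 1))).map t).prod * t r
      = L * (t r * t (r + 1) * (R * t r)) := by simp [hsplit, L, R, mul_assoc]
    _ =± L * (t r * t (r + 1) * (t r * R)) := (hR.mul_left _).mul_left _
    _ = L * t (r + 1) * (t r * t (r + 1) * R) := by
      rw [← mul_assoc (t r * t (r + 1)), ht.braid r (by omega)]
      simp only [mul_assoc]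
    _ =± t (r + 1) * L * (t r * t (r + 1) * R) := hL.mul_right _
    _ = t (r + 1) * ((List.range' s (r - s + (c + 1 + 1))).map t).prod := by
      simp [hsplit, L, R, mul_assoc]

theorem range'_prod_pow_mul (ht : SpinBraidRelations t N) {s k r d : ℕ} (hsr : s ≤ r)
    (hr : r + d + 1 ≤ s + k) (hk : s + k ≤ N) :
    ((List.range' s k).map t).prod ^ d * t r =± t (r + d) * ((List.range' s k).map t).prod ^ d :=
  EqUpToSign.pow_mul_of_forall (x := fun i => t (r + i)) fun i hi => by
    simpa only [Nat.add_assoc] using ht.range'_prod_mul (r := r + i) (by omega) (by omega) hk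

theorem range'_prod_sq_mul_last (ht : SpinBraidRelations t N) {s k : ℕ} (hk : s + k + 1 ≤ N) :
    ((List.range' s (k + 1)).map t).prod ^ 2 * t (s + k) =±
      t s * ((List.range' s (k + 1)).map t).prod ^ 2 := by
  set C := ((List.range' s (k + 1)).map t).prod
  have hlast : C * t (s + k) = ((List.range' s k).map t).prod := by
    simp [C, List.range'_1_concat, mul_assoc, ht.mul_self]
  have hfirst : t s * C = ((List.range' (s + 1) k).map t).prod := by
    simp [C, List.range'_succ, ← mul_assoc, ht.mul_self]
  have hshift : C * ((List.range' s k).map t).prod =± ((List.range' (s + 1) k).map t).prod * C :=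
    EqUpToSign.mul_prod_range'_of_forall fun i hi => by
      simpa only [Nat.add_right_comm s 1 i] using
        ht.range'_prod_mul (r := s + i) (by omega) (by omega) (by omega)
  calc C ^ 2 * t (s + k) = C * ((List.range' s k).map t).prod := by rw [sq, mul_assoc, hlast]
    _ =± ((List.range' (s + 1) k).map t).prod * C := hshift
    _ = t s * C ^ 2 := by rw [← hfirst, sq, mul_assoc]

section Rotation

variable {s α β : ℕ}

theorem range'_prod_pow_mul_of_lt_left (ht : SpinBraidRelations t N) (hN : s + α + β + 1 ≤ N)
    {i : ℕ} (hi : i < α) :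
    ((List.range' s (α + β + 1)).map t).prod ^ (β + 1) * t (s + i) =±
      t (s + β + 1 + i) * ((List.range' s (α + β + 1)).map t).prod ^ (β + 1) := by
  have h := ht.range'_prod_pow_mul (s := s) (k := α + β + 1) (r := s + i) (d := β + 1)
    le_self_add (by omega) (by omega)
  rwa [show s + i + (β + 1) = s + β + 1 + i by omega] at h

theorem range'_prod_pow_mul_of_lt_right (ht : SpinBraidRelations t N) (hN : s + α + β + 1 ≤ N)
    {i : ℕ} (hi : i < β) :
    ((List.range' s (α + β + 1)).map t).prod ^ (β + 1) * t (s + α + 1 + i) =±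
      t (s + i) * ((List.range' s (α + β + 1)).map t).prod ^ (β + 1) := by
  set C := ((List.range' s (α + β + 1)).map t).prod
  set e := β - 1 - i with he
  have hpow : C ^ (β + 1) = C ^ i * (C ^ 2 * C ^ e) := by
    rw [← pow_add, ← pow_add]
    congr 1
    omega
  have h₁ : C ^ e * t (s + α + 1 + i) =± t (s + (α + β)) * C ^ e := by
    have h := ht.range'_prod_pow_mul (s := s) (k := α + β + 1) (r := s + α + 1 + i) (d := e)
      (by omega) (by omega) (by omega)
    rwa [show s + α + 1 + i + e = s + (α + β) by omega] at h
  have h₂ : C ^ 2 * t (s + (α + β)) =± t s * C ^ 2 :=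
    ht.range'_prod_sq_mul_last (k := α + β) (by omega)
  have h₃ : C ^ i * t s =± t (s + i) * C ^ i :=
    ht.range'_prod_pow_mul (k := α + β + 1) le_rfl (by omega) (by omega)
  calc C ^ (β + 1) * t (s + α + 1 + i) = C ^ i * (C ^ 2 * (C ^ e * t (s + α + 1 + i))) := by
        rw [hpow]; simp only [mul_assoc]
    _ =± C ^ i * (C ^ 2 * (t (s + (α + β)) * C ^ e)) := (h₁.mul_left _).mul_left _
    _ = C ^ i * (C ^ 2 * t (s + (α + β))) * C ^ e := by simp only [mul_assoc]
    _ =± C ^ i * (t s * C ^ 2) * C ^ e := (h₂.mul_left _).mul_right _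
    _ = C ^ i * t s * (C ^ 2 * C ^ e) := by simp only [mul_assoc]
    _ =± t (s + i) * C ^ i * (C ^ 2 * C ^ e) := h₃.mul_right _
    _ = t (s + i) * C ^ (β + 1) := by rw [hpow]; simp only [mul_assoc]

theorem range'_prod_pow_mul_blocks (ht : SpinBraidRelations t N) (hN : s + α + β + 1 ≤ N) :
    ((List.range' s (α + β + 1)).map t).prod ^ (β + 1) *
        ((List.range' s α ++ List.range' (s + α + 1) β).map t).prod =±
      ((List.range' s β ++ List.range' (s + β + 1) α).map t).prod *
        ((List.range' s (α + β + 1)).map t).prod ^ (β + 1) := by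
  set w := ((List.range' s (α + β + 1)).map t).prod ^ (β + 1)
  set X₁ := ((List.range' s α).map t).prod
  set X₂ := ((List.range' (s + α + 1) β).map t).prod
  set Y₁ := ((List.range' s β).map t).prod
  set Y₂ := ((List.range' (s + β + 1) α).map t).prod
  have h₁ : w * X₁ =± Y₂ * w :=
    EqUpToSign.mul_prod_range'_of_forall fun i hi => ht.range'_prod_pow_mul_of_lt_left hN hi
  have h₂ : w * X₂ =± Y₁ * w :=
    EqUpToSign.mul_prod_range'_of_forall fun i hi => ht.range'_prod_pow_mul_of_lt_right hN hi
  have hswap : Y₂ * Y₁ =± Y₁ * Y₂ :=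
    (ht.prod_mul_prod_eqUpToSign (by simp only [List.mem_range'_1]; omega)
      (by simp only [List.mem_range'_1]; omega)).symm
  calc w * ((List.range' s α ++ List.range' (s + α + 1) β).map t).prod = w * X₁ * X₂ := by
        simp [X₁, X₂, mul_assoc]
    _ =± Y₂ * w * X₂ := h₁.mul_right _
    _ = Y₂ * (w * X₂) := mul_assoc _ _ _
    _ =± Y₂ * (Y₁ * w) := h₂.mul_left _
    _ = Y₂ * Y₁ * w := (mul_assoc _ _ _).symm
    _ =± Y₁ * Y₂ * w := hswap.mul_right _
    _ = ((List.range' s β ++ List.range' (s + β + 1) α).map t).prod * w := by simp [Y₁, Y₂]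

end Rotation

end SpinBraidRelations

/-- The indices (0-based, as for `tN`) of the generators in `t_γ`, with the blocks of `γ` laid
out from position `s` on: a block `a` contributes `s, s + 1, …, s + a - 2`. -/
def compWord : ℕ → List ℕ → List ℕ
  | _, [] => []
  | s, a :: γ => List.range' s (a - 1) ++ compWord (s + a) γ

@[simp] theorem compWord_nil (s : ℕ) : compWord s [] = [] := rfl

@[simp] theorem compWord_cons (s a : ℕ) (γ : List ℕ) :
    compWord s (a :: γ) = List.range' s (a - 1) ++ compWord (s + a) γ := rfl

theorem compWord_append (s : ℕ) (γ₁ γ₂ : List ℕ) :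
    compWord s (γ₁ ++ γ₂) = compWord s γ₁ ++ compWord (s + γ₁.sum) γ₂ := by
  induction γ₁ generalizing s with
  | nil => simp
  | cons a γ₁ ih => simp [ih, Nat.add_assoc]

theorem bounds_of_mem_compWord {s i : ℕ} {γ : List ℕ} (hi : i ∈ compWord s γ) :
    s ≤ i ∧ i + 2 ≤ s + γ.sum := by
  induction γ generalizing s with
  | nil => simp at hi
  | cons a γ ih =>
    simp only [compWord_cons, List.mem_append, List.mem_range'_1] at hi
    rcases hi with hi | hi
    · simp only [List.sum_cons]; omega
    · have := ih hi
      simp only [List.sum_cons]; omega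

theorem length_compWord_add_length {s : ℕ} {γ : List ℕ} (hpos : ∀ a ∈ γ, 0 < a) :
    (compWord s γ).length + γ.length = γ.sum := by
  induction γ generalizing s with
  | nil => simp
  | cons a γ ih =>
    have ha := hpos a List.mem_cons_self
    have := ih (s := s + a) fun b hb => hpos b (List.mem_cons_of_mem a hb)
    simp only [compWord_cons, List.length_append, List.length_range', List.length_cons,
      List.sum_cons]
    omega

theorem exists_append_odd_sum_add_length {γ : List ℕ} (h : ¬ ∀ a ∈ γ, Odd a) :
    ∃ γ₁ γ₂, γ = γ₁ ++ γ₂ ∧ Odd (γ₁.sum + γ₁.length) := by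
  induction γ with
  | nil => simp at h
  | cons a γ ih =>
    by_cases ha : Odd a
    · obtain ⟨γ₁, γ₂, rfl, hodd⟩ := ih fun hall => h (by simpa [ha] using hall)
      refine ⟨a :: γ₁, γ₂, rfl, ?_⟩
      rw [List.sum_cons, List.length_cons]
      rw [Nat.odd_iff] at ha hodd ⊢
      omega
    · exact ⟨[a], γ, rfl, by simpa [Nat.odd_add_one] using ha⟩

namespace SpinBraidRelations

variable {A : Type*} [Ring A] [Algebra ℂ A] {t : ℕ → A} {N : ℕ}

theorem prod_compWord_mem_commSpan (ht : SpinBraidRelations t N) {γ : List ℕ}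
    (hpos : ∀ a ∈ γ, 0 < a) (hN : γ.sum ≤ N + 1) (hlen : Even (γ.sum - γ.length))
    (hodd : ¬ ∀ a ∈ γ, Odd a) : ((compWord 0 γ).map t).prod ∈ commSpan A := by
  obtain ⟨γ₁, γ₂, rfl, hodd₁⟩ := exists_append_odd_sum_add_length hodd
  have hlen₁ := length_compWord_add_length (s := 0)
    fun a ha => hpos a (List.mem_append_left γ₂ ha)
  have hlen₂ := length_compWord_add_length (s := γ₁.sum)
    fun a ha => hpos a (List.mem_append_right γ₁ ha)
  simp only [List.sum_append, List.length_append] at hN hlen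
  rw [compWord_append, List.map_append, List.prod_append, Nat.zero_add]
  refine mul_mem_commSpan_of_anticomm ?_
  rw [ht.prod_mul_prod (fun i hi j hj => ?_) (fun j hj => ?_), Odd.neg_one_pow, neg_one_zsmul]
  · rw [Nat.odd_mul, Nat.odd_iff, Nat.odd_iff]
    rw [Nat.odd_iff] at hodd₁
    obtain ⟨k, hk⟩ := hlen
    omega
  · have := bounds_of_mem_compWord hi
    have := bounds_of_mem_compWord hj
    omega
  · have := bounds_of_mem_compWord hj
    omega

theorem mkQ_prod_compWord_swap (ht : SpinBraidRelations t N) {γ₁ γ₂ : List ℕ} {u v : ℕ}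
    (hu : 0 < u) (hv : 0 < v) (hN : (γ₁ ++ u :: v :: γ₂).sum ≤ N + 1) :
    (commSpan A).mkQ ((compWord 0 (γ₁ ++ u :: v :: γ₂)).map t).prod =±
      (commSpan A).mkQ ((compWord 0 (γ₁ ++ v :: u :: γ₂)).map t).prod := by
  obtain ⟨α, rfl⟩ : ∃ α, u = α + 1 := ⟨u - 1, by omega⟩
  obtain ⟨β, rfl⟩ : ∃ β, v = β + 1 := ⟨v - 1, by omega⟩
  simp only [List.sum_append, List.sum_cons] at hN
  set s := γ₁.sum
  set C := ((List.range' s (α + β + 1)).map t).prod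
  set W₁ := ((compWord 0 γ₁).map t).prod
  set W₂ := ((compWord (s + (α + β + 2)) γ₂).map t).prod
  set X := ((List.range' s α ++ List.range' (s + α + 1) β).map t).prod
  set X' := ((List.range' s β ++ List.range' (s + β + 1) α).map t).prod
  have hγ : ((compWord 0 (γ₁ ++ (α + 1) :: (β + 1) :: γ₂)).map t).prod =
      W₁ * (X * W₂) := by
    simp only [compWord_append, compWord_cons, List.map_append, List.prod_append, W₁, W₂, X, s,
      Nat.zero_add, Nat.add_sub_cancel, Nat.add_assoc, mul_assoc]
    rw [show α + (1 + (β + 1)) = α + (β + 2) by omega]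
  have hγ' : ((compWord 0 (γ₁ ++ (β + 1) :: (α + 1) :: γ₂)).map t).prod =
      W₁ * (X' * W₂) := by
    simp only [compWord_append, compWord_cons, List.map_append, List.prod_append, W₁, W₂, X', s,
      Nat.zero_add, Nat.add_sub_cancel, Nat.add_assoc, mul_assoc]
    rw [show β + (1 + (α + 1)) = α + (β + 2) by omega]
  have hW₁ : C ^ (β + 1) * W₁ =± W₁ * C ^ (β + 1) :=
    EqUpToSign.pow_mul_of_forall (x := fun _ => W₁) fun _ _ =>
      (ht.prod_mul_prod_eqUpToSign (fun i hi j hj => by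
        have := bounds_of_mem_compWord hi; simp only [List.mem_range'_1] at hj; omega)
        (fun j hj => by simp only [List.mem_range'_1] at hj; omega)).symm
  have hW₂ : C ^ (β + 1) * W₂ =± W₂ * C ^ (β + 1) :=
    EqUpToSign.pow_mul_of_forall (x := fun _ => W₂) fun _ _ =>
      ht.prod_mul_prod_eqUpToSign (fun i hi j hj => by
        have := bounds_of_mem_compWord hj; simp only [List.mem_range'_1] at hi; omega)
        (fun j hj => by have := bounds_of_mem_compWord hj; omega)
  have hX : C ^ (β + 1) * X =± X' * C ^ (β + 1) := ht.range'_prod_pow_mul_blocks (by omega)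
  rw [hγ, hγ']
  refine mkQ_eqUpToSign_of_isUnit ((ht.isUnit_prod (List.range' s (α + β + 1))).pow (β + 1)) ?_
  calc C ^ (β + 1) * (W₁ * (X * W₂))
        = C ^ (β + 1) * W₁ * (X * W₂) := (mul_assoc _ _ _).symm
    _ =± W₁ * C ^ (β + 1) * (X * W₂) := hW₁.mul_right _
    _ = W₁ * (C ^ (β + 1) * X * W₂) := by simp only [mul_assoc]
    _ =± W₁ * (X' * C ^ (β + 1) * W₂) := (hX.mul_right _).mul_left _
    _ = W₁ * (X' * (C ^ (β + 1) * W₂)) := by simp only [mul_assoc]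
    _ =± W₁ * (X' * (W₂ * C ^ (β + 1))) := (hW₂.mul_left _).mul_left _
    _ = W₁ * (X' * W₂) * C ^ (β + 1) := by simp only [mul_assoc]

theorem mkQ_prod_compWord_perm (ht : SpinBraidRelations t N) {l l' : List ℕ} (hp : l.Perm l')
    {γ₁ : List ℕ} (hpos : ∀ a ∈ l, 0 < a) (hN : (γ₁ ++ l).sum ≤ N + 1) :
    (commSpan A).mkQ ((compWord 0 (γ₁ ++ l)).map t).prod =±
      (commSpan A).mkQ ((compWord 0 (γ₁ ++ l')).map t).prod := by
  induction hp generalizing γ₁ with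
  | nil => exact .refl _
  | cons x _ ih =>
    simpa using ih (γ₁ := γ₁ ++ [x]) (fun a ha => hpos a (List.mem_cons_of_mem x ha))
      (by simpa using hN)
  | swap x y l => exact ht.mkQ_prod_compWord_swap (hpos y (by simp)) (hpos x (by simp)) hN
  | trans hp₁ _ ih₁ ih₂ =>
    refine (ih₁ hpos hN).trans (ih₂ (fun a ha => hpos a (hp₁.mem_iff.2 ha)) ?_)
    rwa [List.sum_append, ← hp₁.sum_eq, ← List.sum_append]

end SpinBraidRelations

theorem spinBraidRelations_tN (n : ℕ) : SpinBraidRelations (tN n) (n - 1) where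
  mul_self k := by
    unfold tN
    split_ifs
    exacts [rel_tsq n _, one_mul 1]
  braid i h := by
    simp only [tN, dif_pos h, dif_pos (Nat.lt_of_succ_lt h)]
    exact rel_braid n i h
  anticomm i j hij hj := by
    have hi : i < n - 1 := by omega
    simp only [tN, dif_pos hi, dif_pos hj]
    set x := tH n ⟨i, hi⟩
    set y := tH n ⟨j, hj⟩
    have hxx : x * x = 1 := rel_tsq n _
    have hyy : y * y = 1 := rel_tsq n _
    have hxyxy : x * y * (x * y) = -1 := rel_tt n _ _ (Or.inl hij)
    calc x * y = -(x * (x * y * (x * y)) * y) := by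
          rw [hxyxy, mul_neg_one (a := x), neg_mul, neg_neg]
      _ = -(x * x * (y * x) * (y * y)) := by noncomm_ring
      _ = -(y * x) := by rw [hxx, hyy, one_mul, mul_one]

theorem tSeg_eq (n a b : ℕ) : tSeg n a b = ((List.range' a (b - a - 1)).map (tN n)).prod := by
  simp only [tSeg, List.range'_eq_map_range, List.map_map]
  rfl

theorem tGamma_eq_prod_compWord (n : ℕ) (γ : List ℕ) :
    tGamma n γ = ((compWord 0 γ).map (tN n)).prod := by
  suffices h : ∀ s, ((List.range γ.length).map fun k =>
      tSeg n (s + (γ.take k).sum) (s + (γ.take (k + 1)).sum)).prod =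
        ((compWord s γ).map (tN n)).prod by
    simpa [tGamma] using h 0
  induction γ with
  | nil => simp
  | cons a γ ih =>
    intro s
    rw [List.length_cons, List.range_succ_eq_map, List.map_cons, List.prod_cons, List.map_map]
    have htail :
        (fun k => tSeg n (s + ((a :: γ).take k).sum) (s + ((a :: γ).take (k + 1)).sum)) ∘
          Nat.succ = fun k => tSeg n (s + a + (γ.take k).sum) (s + a + (γ.take (k + 1)).sum) := by
      funext k
      simp [Nat.add_assoc]
    rw [htail, ih, compWord_cons, List.map_append, List.prod_append, tSeg_eq]
    simp

theorem tGamma_reduction_spin_general (n : ℕ)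
    (γ : List ℕ) (hpos : ∀ g ∈ γ, 0 < g) (hsum : γ.sum = n)
    (hlen : Even (n - γ.length)) :
    ((¬ ∀ a ∈ γ, Odd a) → tGamma n γ ∈ commSpan (HS n)) ∧
    ((∀ a ∈ γ, Odd a) →
      tGamma n γ - tGamma n (sortDescL γ) ∈ commSpan (HS n) ∨
      tGamma n γ + tGamma n (sortDescL γ) ∈ commSpan (HS n)) := by
  have ht := spinBraidRelations_tN n
  have hN : γ.sum ≤ n - 1 + 1 := by omega
  simp only [tGamma_eq_prod_compWord]
  refine ⟨fun hodd => ht.prod_compWord_mem_commSpan hpos hN (hsum ▸ hlen) hodd, fun _ => ?_⟩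
  have hperm : γ.Perm (sortDescL γ) :=
    ((List.reverse_perm _).trans (by rw [← Multiset.coe_eq_coe, Multiset.sort_eq])).symm
  exact (mkQ_eqUpToSign_iff _).1 (ht.mkQ_prod_compWord_perm hperm (γ₁ := []) hpos hN)

/-- Let `γ` be a composition of `n` with `ℓ(t_γ) = n - k` even and
let `μ` be the corresponding partition.  If `μ ∉ 𝒪𝒫_n` then `t_γ` is a
commutator-combination; if `μ ∈ 𝒪𝒫_n` then `t_γ ≡ ± t_μ` modulo commutators. -/
theorem tGamma_reduction_spin (n : ℕ) (hn : 2 ≤ n)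
    (γ : List ℕ) (hpos : ∀ g ∈ γ, 0 < g) (hsum : γ.sum = n)
    (hlen : Even (n - γ.length)) :
    ((¬ ∀ a ∈ γ, Odd a) → tGamma n γ ∈ commSpan (HS n)) ∧
    ((∀ a ∈ γ, Odd a) →
      tGamma n γ - tGamma n (sortDescL γ) ∈ commSpan (HS n) ∨
      tGamma n γ + tGamma n (sortDescL γ) ∈ commSpan (HS n)) :=
  tGamma_reduction_spin_general n γ hpos hsum hlen

end SAHA
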